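/- Let P = ℤ^d or ℝ^d with the product order, F a functor from pointwise finite-dimensional persistence modules over P to finite-dimensional K-vector spaces, M and N pointwise finite-dimensional persistence modules over P, and x ≤ x' ≤ y' ≤ y elements of P. Suppose there exist morphisms f : M → N[x'−x] and g : N → M[y−y'] such that g[x'−x] ∘ f = sh_M^{(y−x)−(y'−x')}. Then rk_{M,F}(x,y) ≤ rk_{N,F}(x',y'). -/

import Mathlib

open scoped Classical ENNReal

noncomputable section

/-- A persistence module over a poset `P` with coefficients in a field `K`:
vector spaces `V x` together with structure maps `map : V x →ₗ V y` for `x ≤ y`. -/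
structure PersistenceModule (K : Type) [Field K] (P : Type) [PartialOrder P] where
  V : P → Type
  [acg : ∀ x, AddCommGroup (V x)]
  [mod : ∀ x, Module K (V x)]
  map : ∀ {x y : P}, x ≤ y → (V x →ₗ[K] V y)
  map_refl : ∀ x : P, map (le_refl x) = LinearMap.id
  map_comp : ∀ {x y z : P} (hxy : x ≤ y) (hyz : y ≤ z),
      (map hyz).comp (map hxy) = map (hxy.trans hyz)

attribute [instance] PersistenceModule.acg PersistenceModule.mod

variable {K : Type} [Field K]

section Basic

variable {P : Type} [PartialOrder P]

/-- Pointwise finite-dimensionality. -/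
def PersistenceModule.pfd (M : PersistenceModule K P) : Prop :=
  ∀ x, FiniteDimensional K (M.V x)

/-- A morphism of persistence modules. -/
structure PersistenceHom (M N : PersistenceModule K P) where
  app : ∀ x, M.V x →ₗ[K] N.V x
  naturality : ∀ {x y : P} (h : x ≤ y),
      (app y).comp (M.map h) = (N.map h).comp (app x)

/-- The identity morphism. -/
def PersistenceHom.id (M : PersistenceModule K P) : PersistenceHom M M where
  app _ := LinearMap.id
  naturality _ := by simp

/-- Composition of morphisms of persistence modules. -/
def PersistenceHom.comp {M N L : PersistenceModule K P}
    (g : PersistenceHom N L) (f : PersistenceHom M N) : PersistenceHom M L where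
  app x := (g.app x).comp (f.app x)
  naturality {x y} h := by
    ext v
    have hf := LinearMap.congr_fun (f.naturality h) v
    have hg := LinearMap.congr_fun (g.naturality h) (f.app x v)
    simp only [LinearMap.comp_apply] at hf hg ⊢
    rw [hf, hg]

/-- Two persistence modules are isomorphic iff there is a morphism which is
pointwise bijective. -/
def PersistenceIso (M N : PersistenceModule K P) : Prop :=
  ∃ f : PersistenceHom M N, ∀ x, Function.Bijective (f.app x)

/-- The (pointwise) direct sum of two persistence modules. -/
def PersistenceModule.dsum (M₁ M₂ : PersistenceModule K P) : PersistenceModule K P where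
  V x := M₁.V x × M₂.V x
  map h := (M₁.map h).prodMap (M₂.map h)
  map_refl x := by
    show (M₁.map (le_refl x)).prodMap (M₂.map (le_refl x)) = LinearMap.id
    rw [M₁.map_refl, M₂.map_refl]; rfl
  map_comp hxy hyz := by
    show ((M₁.map hyz).prodMap (M₂.map hyz)).comp ((M₁.map hxy).prodMap (M₂.map hxy)) =
      (M₁.map (hxy.trans hyz)).prodMap (M₂.map (hxy.trans hyz))
    rw [← M₁.map_comp hxy hyz, ← M₂.map_comp hxy hyz]; rfl

/-- The rank of a linear map, as a natural number. -/
noncomputable def lrank {V W : Type} [AddCommGroup V] [Module K V]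
    [AddCommGroup W] [Module K W] (f : V →ₗ[K] W) : ℕ :=
  Module.finrank K (LinearMap.range f)

/-- The classical rank invariant of a persistence module. -/
noncomputable def rankInv (M : PersistenceModule K P) (x y : P) : ℕ∞ :=
  if h : x ≤ y then (lrank (M.map h) : ℕ∞) else ⊤

variable {n : ℕ}

/-- The index set of the restriction `M|_S`: the disjoint union of the slices. -/
abbrev SliceIdx (S : Fin n → Finset P) : Type := Σ i : Fin n, {x // x ∈ S i}

/-- The underlying vector space of the restriction `M|_S = ⊕_{x ∈ S₁ ∪ … ∪ Sₙ} M_x`. -/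
abbrev sliceSpace (M : PersistenceModule K P) (S : Fin n → Finset P) : Type :=
  (p : SliceIdx S) → M.V p.2.1

/-- The nilpotent operator `T_{M,S}` on `M|_S`: its component `M_x → M_y` is the
structure map `M_{yx}` if `x ∈ S_i`, `y ∈ S_{i+1}` and `x ≤ y`, and `0` otherwise. -/
noncomputable def TMap (M : PersistenceModule K P) (S : Fin n → Finset P) :
    sliceSpace M S →ₗ[K] sliceSpace M S :=
  LinearMap.pi fun p => ∑ q : SliceIdx S,
    if h : (q.1 : ℕ) + 1 = (p.1 : ℕ) ∧ q.2.1 ≤ p.2.1 then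
      (M.map h.2).comp (LinearMap.proj q)
    else 0

/-- The restriction `f|_S = ⊕_{x ∈ S} f_x` of a morphism to the slices. -/
noncomputable def sliceHom {M N : PersistenceModule K P} (f : PersistenceHom M N)
    (S : Fin n → Finset P) : sliceSpace M S →ₗ[K] sliceSpace N S :=
  LinearMap.pi fun p => (f.app p.2.1).comp (LinearMap.proj p)

/-- The `i`-th entry of the Jordan type of `M` at `S` (as an integer):
`a_i = rank(T^{i-1}) + rank(T^{i+1}) - 2 rank(T^i)`, the number of `i × i`
Jordan blocks of the nilpotent operator `T_{M,S}`. -/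
noncomputable def jt (M : PersistenceModule K P) (S : Fin n → Finset P) (i : ℕ) : ℤ :=
  (lrank (TMap M S ^ (i - 1)) : ℤ) + (lrank (TMap M S ^ (i + 1)) : ℤ)
    - 2 * (lrank (TMap M S ^ i) : ℤ)

end Basic

section Shifts

variable {P : Type} [AddCommGroup P] [PartialOrder P] [IsOrderedAddMonoid P]

/-- The shift `M[x]` of a persistence module, `(M[x])_z = M_{x+z}`. -/
def PersistenceModule.shift (M : PersistenceModule K P) (x : P) :
    PersistenceModule K P where
  V z := M.V (x + z)
  map h := M.map (add_le_add_right h x)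
  map_refl z := M.map_refl (x + z)
  map_comp hxy hyz := M.map_comp _ _

/-- Shifts preserve pointwise finite-dimensionality. -/
theorem PersistenceModule.pfd.shift {M : PersistenceModule K P} (hM : M.pfd) (x : P) :
    (M.shift x).pfd := fun z => hM (x + z)

/-- The shift `f[x]` of a morphism of persistence modules. -/
def PersistenceHom.shiftHom {M N : PersistenceModule K P} (f : PersistenceHom M N)
    (x : P) : PersistenceHom (M.shift x) (N.shift x) where
  app z := f.app (x + z)
  naturality h := f.naturality (add_le_add_right h x)

/-- The shift morphism `sh_M^ε : M → M[ε]`, with components `M_{z+ε,z}`. -/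
def shMor (M : PersistenceModule K P) (ε : P) (hε : 0 ≤ ε) :
    PersistenceHom M (M.shift ε) where
  app z := M.map (le_add_of_nonneg_left hε)
  naturality {z w} h := by
    show (M.map (le_add_of_nonneg_left hε)).comp (M.map h) =
      (M.map (add_le_add_right h ε)).comp (M.map (le_add_of_nonneg_left hε))
    rw [M.map_comp, M.map_comp]

/-- `(f, g)` form an `ε`-interleaving between `M` and `N`: componentwise,
`g[ε] ∘ f = sh_M^{2ε}` and `f[ε] ∘ g = sh_N^{2ε}`. -/
def IsInterleavingPair {M N : PersistenceModule K P} (ε : P) (hε : 0 ≤ ε)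
    (f : PersistenceHom M (N.shift ε)) (g : PersistenceHom N (M.shift ε)) : Prop :=
  (∀ z : P, (g.app (ε + z)).comp (f.app z) =
    M.map ((le_add_of_nonneg_left hε).trans
      (add_le_add_right (le_add_of_nonneg_left hε) ε))) ∧
  (∀ z : P, (f.app (ε + z)).comp (g.app z) =
    N.map ((le_add_of_nonneg_left hε).trans
      (add_le_add_right (le_add_of_nonneg_left hε) ε)))

/-- There exists an `ε`-interleaving between `M` and `N`. -/
def IsInterleaving (M N : PersistenceModule K P) (ε : P) (hε : 0 ≤ ε) : Prop :=
  ∃ (f : PersistenceHom M (N.shift ε)) (g : PersistenceHom N (M.shift ε)),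
    IsInterleavingPair ε hε f g

variable {n : ℕ}

/-- The map `⊕_{z ∈ S} M_{y+z,x+z} : M[x]|_S → M[y]|_S` for `x ≤ y`. -/
noncomputable def transMap (M : PersistenceModule K P) (S : Fin n → Finset P)
    {x y : P} (h : x ≤ y) :
    sliceSpace (M.shift x) S →ₗ[K] sliceSpace (M.shift y) S :=
  LinearMap.pi fun p => (M.map (add_le_add_left h p.2.1)).comp (LinearMap.proj p)

/-- The degree-`i` Jordan rank invariant `rk^i_{M,S}(x,y)`: for `x ≤ y` it is the rank
of the structure map `(M^i_S)_{yx}` of the degree-`i` Jordan module, i.e. the rank of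
the restriction of `⊕_z M_{y+z,x+z}` to `Im(T^i_{M[x],S})`; it is `∞` otherwise. -/
noncomputable def jordanRk (M : PersistenceModule K P) (S : Fin n → Finset P)
    (i : ℕ) (x y : P) : ℕ∞ :=
  if h : x ≤ y then
    (Module.finrank K
      (Submodule.map (transMap M S h) (LinearMap.range (TMap (M.shift x) S ^ i))) : ℕ∞)
  else ⊤

end Shifts

section Functors

variable {P : Type} [PartialOrder P]

/-- A functor from the category of pointwise finite-dimensional persistence modules
over `P` to the category of finite-dimensional `K`-vector spaces. -/
structure PMFunctor (K : Type) [Field K] (P : Type) [PartialOrder P] where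
  obj : (M : PersistenceModule K P) → M.pfd → Type
  [objAcg : ∀ M hM, AddCommGroup (obj M hM)]
  [objMod : ∀ M hM, Module K (obj M hM)]
  objFin : ∀ M hM, FiniteDimensional K (obj M hM)
  fmap : {M N : PersistenceModule K P} → (hM : M.pfd) → (hN : N.pfd) →
      PersistenceHom M N → (obj M hM →ₗ[K] obj N hN)
  fmap_id : ∀ (M : PersistenceModule K P) (hM : M.pfd),
      fmap hM hM (PersistenceHom.id M) = LinearMap.id
  fmap_comp : ∀ {M N L : PersistenceModule K P} (hM : M.pfd) (hN : N.pfd) (hL : L.pfd)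
      (f : PersistenceHom M N) (g : PersistenceHom N L),
      fmap hM hL (g.comp f) = (fmap hN hL g).comp (fmap hM hN f)

attribute [instance] PMFunctor.objAcg PMFunctor.objMod

end Functors

section FRank

variable {P : Type} [AddCommGroup P] [PartialOrder P] [IsOrderedAddMonoid P]

/-- The `F`-rank invariant `rk_{M,F}(x,y)`: for `x ≤ y` it is the rank of
`F(sh^{y-x}_{M[x]}) : F(M[x]) → F(M[x][y-x])`, and `∞` otherwise. -/
noncomputable def frk (F : PMFunctor K P) (M : PersistenceModule K P) (hM : M.pfd)
    (x y : P) : ℕ∞ :=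
  if h : x ≤ y then
    (lrank (F.fmap (hM.shift x) ((hM.shift x).shift (y - x))
      (shMor (M.shift x) (y - x) (sub_nonneg.mpr h))) : ℕ∞)
  else ⊤

end FRank

section RankFunctions

variable {P : Type} [PartialOrder P]

/-- A rank function: `∞` off the order relation, and "erosion monotone". -/
def IsRankFunction (F : P → P → ℕ∞) : Prop :=
  (∀ x y : P, ¬ x ≤ y → F x y = ⊤) ∧
  ∀ x x' y' y : P, x ≤ x' → x' ≤ y' → y' ≤ y → F x y ≤ F x' y'

end RankFunctions

section Distances

variable {R : Type} [CommRing R] [LinearOrder R] [IsStrictOrderedRing R] {d : ℕ}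

/-- The interleaving distance between two persistence modules over `Fin d → R`,
computed in `ℝ≥0∞` via the embedding `toR : R → ℝ`. -/
noncomputable def interleavingDist (toR : R → ℝ)
    (M N : PersistenceModule K (Fin d → R)) : ℝ≥0∞ :=
  sInf {c : ℝ≥0∞ | ∃ (ε : R) (hε : 0 ≤ ε),
    IsInterleaving M N (fun _ => ε) (fun _ => hε) ∧ c = ENNReal.ofReal (toR ε)}

/-- The erosion distance between two `ℕ∞`-valued functions on pairs of points. -/
noncomputable def erosionDist (toR : R → ℝ)
    (F G : (Fin d → R) → (Fin d → R) → ℕ∞) : ℝ≥0∞ :=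
  sInf {c : ℝ≥0∞ | ∃ ε : R, 0 ≤ ε ∧
    (∀ x y : Fin d → R, x ≤ y →
      F (x - fun _ => ε) (y + fun _ => ε) ≤ G x y ∧
      G (x - fun _ => ε) (y + fun _ => ε) ≤ F x y) ∧
    c = ENNReal.ofReal (toR ε)}

/-- The persistence landscape `λ_F(k,x)` of a rank function `F`. -/
noncomputable def landscape (toR : R → ℝ)
    (F : (Fin d → R) → (Fin d → R) → ℕ∞) (k : ℕ) (x : Fin d → R) : ℝ≥0∞ :=
  sSup {c : ℝ≥0∞ | ∃ ε : ℝ, 0 < ε ∧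
    (∀ h : Fin d → R, (∀ i, |toR (h i)| ≤ ε) → (k : ℕ∞) ≤ F (x - h) (x + h)) ∧
    c = ENNReal.ofReal ε}

/-- The sup-distance `‖λ_F - λ_G‖_∞` between the landscapes of `F` and `G`. -/
noncomputable def landscapeDist (toR : R → ℝ)
    (F G : (Fin d → R) → (Fin d → R) → ℕ∞) : ℝ≥0∞ :=
  ⨆ (k : ℕ) (x : Fin d → R),
    max (landscape toR F k x - landscape toR G k x)
      (landscape toR G k x - landscape toR F k x)

end Distances

section Zigzag

variable {P : Type} [PartialOrder P] {n : ℕ}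

/-- The orientation relation of a zigzag: for each `k < n - 1`, exactly one
of the covering pairs `(k, k+1)` (if `ω k = true`) or `(k+1, k)` (if `ω k = false`),
and no other pairs. -/
def zigzagStep (n : ℕ) (ω : ℕ → Bool) (i j : Fin n) : Prop :=
  ((j : ℕ) = (i : ℕ) + 1 ∧ ω (i : ℕ) = true) ∨
  ((i : ℕ) = (j : ℕ) + 1 ∧ ω (j : ℕ) = false)

/-- `P` is a zigzag poset on `{0, …, n-1}` via the labeling `e`, with orientation `ω`:
the order of `P` is the reflexive-transitive closure of the zigzag relation. -/
def IsZigzag (n : ℕ) (ω : ℕ → Bool) (e : P ≃ Fin n) : Prop :=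
  ∀ a b : P, a ≤ b ↔ Relation.ReflTransGen (zigzagStep n ω) (e a) (e b)

/-- The subposet `{i, …, j}` of a labeled poset. -/
def zzInterval (e : P ≃ Fin n) (i j : ℕ) : Set P :=
  {p | i ≤ (e p : ℕ) ∧ (e p : ℕ) ≤ j}

/-- `S⁺_{ij}`: the minimal elements of the subposet `{i, …, j}`. -/
def zzMin (e : P ≃ Fin n) (i j : ℕ) : Set P :=
  {p | p ∈ zzInterval e i j ∧ ∀ q ∈ zzInterval e i j, q ≤ p → q = p}

/-- `S⁻_{ij}`: the maximal elements of the subposet `{i, …, j}`. -/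
def zzMax (e : P ≃ Fin n) (i j : ℕ) : Set P :=
  {p | p ∈ zzInterval e i j ∧ ∀ q ∈ zzInterval e i j, p ≤ q → q = p}

/-- The map `T_{M,S_{ij}} : ⊕_{x ∈ S⁺_{ij}} M_x → ⊕_{y ∈ S⁻_{ij}} M_y`, whose
`(y,x)`-component is `M_{yx}` if `x ≤ y` and `0` otherwise. -/
noncomputable def Tij (e : P ≃ Fin n) (M : PersistenceModule K P) (i j : ℕ) :
    ((x : zzMin e i j) → M.V x.1) →ₗ[K] ((y : zzMax e i j) → M.V y.1) :=
  letI : Fintype P := Fintype.ofEquiv (Fin n) e.symm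
  LinearMap.pi fun y => ∑ x : zzMin e i j,
    if h : x.1 ≤ y.1 then (M.map h).comp (LinearMap.proj x) else 0

end Zigzag

section Jordan

/-- The underlying space of the `K[t]/(t^n)`-module `⊕_{i=1}^n (K[t]/(t^i))^{a_i}`,
where the summand of dimension `(i : Fin n) + 1` occurs with multiplicity `a i`. -/
abbrev jordanSpace (K : Type) (n : ℕ) (a : Fin n → ℕ) : Type :=
  (i : Fin n) → Fin (a i) → Fin ((i : ℕ) + 1) → K

/-- The nilpotent Jordan block of size `m`, i.e. multiplication by `t` on
`K[t]/(t^m)` in the basis `1, t, …, t^{m-1}`. -/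
noncomputable def jordanBlock (K : Type) [Field K] (m : ℕ) :
    (Fin m → K) →ₗ[K] (Fin m → K) :=
  LinearMap.pi fun k =>
    if _ : (k : ℕ) = 0 then 0
    else LinearMap.proj (⟨(k : ℕ) - 1, Nat.lt_of_le_of_lt (Nat.sub_le _ _) k.isLt⟩ : Fin m)

/-- Multiplication by `t` on `⊕_{i=1}^n (K[t]/(t^i))^{a_i}`. -/
noncomputable def jordanOp (K : Type) [Field K] (n : ℕ) (a : Fin n → ℕ) :
    jordanSpace K n a →ₗ[K] jordanSpace K n a :=
  LinearMap.pi fun i => LinearMap.pi fun j =>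
    (jordanBlock K ((i : ℕ) + 1)).comp
      ((LinearMap.proj j :
          (Fin (a i) → Fin ((i : ℕ) + 1) → K) →ₗ[K] (Fin ((i : ℕ) + 1) → K)).comp
        (LinearMap.proj i :
          jordanSpace K n a →ₗ[K] (Fin (a i) → Fin ((i : ℕ) + 1) → K)))

/-- Two pairs (vector space, endomorphism) are isomorphic as `K[t]`-modules. -/
def OpIso {K : Type} [Field K] {V W : Type} [AddCommGroup V] [Module K V]
    [AddCommGroup W] [Module K W] (T : V →ₗ[K] V) (U : W →ₗ[K] W) : Prop :=
  ∃ e : V ≃ₗ[K] W, ∀ v, e (T v) = U (e v)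

/-- The total space `⊕_{k=1}^n I_k` of the interval representation `I_{[a,b]}`
of the equioriented `A_n` quiver (vertices are `1`-based: vertex `k+1` for `k : Fin n`). -/
abbrev intervalSpace (K : Type) (n a b : ℕ) : Type :=
  {k : Fin n // a ≤ (k : ℕ) + 1 ∧ (k : ℕ) + 1 ≤ b} → K

/-- The operator `T` on `⊕_k I_k` given by the arrow maps of `I_{[a,b]}`. -/
noncomputable def intervalShift (K : Type) [Field K] (n a b : ℕ) :
    intervalSpace K n a b →ₗ[K] intervalSpace K n a b :=
  LinearMap.pi fun k =>
    if h : a ≤ (k.1 : ℕ) then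
      LinearMap.proj
        (⟨⟨(k.1 : ℕ) - 1, Nat.lt_of_le_of_lt (Nat.sub_le _ _) k.1.isLt⟩,
          ⟨by have h2 := k.2.2; show a ≤ (k.1 : ℕ) - 1 + 1; omega,
           by have h2 := k.2.2; show (k.1 : ℕ) - 1 + 1 ≤ b; omega⟩⟩ :
          {k : Fin n // a ≤ (k : ℕ) + 1 ∧ (k : ℕ) + 1 ≤ b})
    else 0

end Jordan

section Grid

variable {d : ℕ}

/-- The grid `[0,ℓ₁] × … × [0,ℓ_d] ⊆ ℤ^d`. -/
def gridSet (d : ℕ) (ℓ : Fin d → ℕ) : Set (Fin d → ℤ) :=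
  {x | ∀ k, 0 ≤ x k ∧ x k ≤ (ℓ k : ℤ)}

/-- The norm slice `S_{i+1} = {x ∈ G : x₁ + … + x_d = i}` of the grid. -/
noncomputable def gridSlice (d : ℕ) (ℓ : Fin d → ℕ) (i : ℕ) : Finset (Fin d → ℤ) :=
  (Fintype.piFinset fun k => Finset.Icc (0 : ℤ) (ℓ k)).filter
    fun x => (∑ k, x k) = (i : ℤ)

/-- A persistence module over `ℤ^d` is supported on `G` if it vanishes off `G`. -/
def supportedOn (M : PersistenceModule K (Fin d → ℤ)) (G : Set (Fin d → ℤ)) : Prop :=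
  ∀ z, z ∉ G → Subsingleton (M.V z)

end Grid

section AnQuiver

variable {P : Type} [PartialOrder P] {n : ℕ}

/-- The space `M|_S(k) = ⊕_{x ∈ S_k} M_x` at the `k`-th vertex of the `A_n` quiver. -/
abbrev sliceLevel (M : PersistenceModule K P) (S : Fin n → Finset P) (k : Fin n) :
    Type :=
  (x : {a // a ∈ S k}) → M.V x.1

/-- The arrow map `T_{M,S}(k) : M|_S(k) → M|_S(k+1)`, whose `(y,x)`-component
is `M_{yx}` if `x ≤ y` and `0` otherwise. -/
noncomputable def sliceArrow (M : PersistenceModule K P) (S : Fin n → Finset P)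
    (k : Fin n) (h : (k : ℕ) + 1 < n) :
    sliceLevel M S k →ₗ[K] sliceLevel M S ⟨(k : ℕ) + 1, h⟩ :=
  LinearMap.pi fun y => ∑ x : {a // a ∈ S k},
    if hxy : x.1 ≤ y.1 then (M.map hxy).comp (LinearMap.proj x) else 0

/-- The value at vertex `k` (with `1`-based label `k+1`) of the direct sum of the
interval representations `I_{[(ind j).1, (ind j).2]}`, `j : Fin m`, of the
equioriented `A_n` quiver. -/
abbrev sumIntSpace (K : Type) {m : ℕ} (ind : Fin m → ℕ × ℕ) {n : ℕ} (k : Fin n) :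
    Type :=
  (j : Fin m) → PLift ((ind j).1 ≤ (k : ℕ) + 1 ∧ (k : ℕ) + 1 ≤ (ind j).2) → K

/-- The arrow map from vertex `k` to vertex `k+1` of the direct sum of interval
representations: the identity on each interval passing through both vertices. -/
noncomputable def sumIntArrow (K : Type) [Field K] {m : ℕ} (ind : Fin m → ℕ × ℕ)
    {n : ℕ} (k : Fin n) (h : (k : ℕ) + 1 < n) :
    sumIntSpace K ind k →ₗ[K] sumIntSpace K ind (⟨(k : ℕ) + 1, h⟩ : Fin n) :=
  LinearMap.pi fun j => LinearMap.pi fun _ =>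
    if hk : (ind j).1 ≤ (k : ℕ) + 1 ∧ (k : ℕ) + 1 ≤ (ind j).2 then
      (LinearMap.proj (PLift.up hk) :
          (PLift ((ind j).1 ≤ (k : ℕ) + 1 ∧ (k : ℕ) + 1 ≤ (ind j).2) → K) →ₗ[K] K).comp
        (LinearMap.proj j : sumIntSpace K ind k →ₗ[K]
          (PLift ((ind j).1 ≤ (k : ℕ) + 1 ∧ (k : ℕ) + 1 ≤ (ind j).2) → K))
    else 0

end AnQuiver

/-!
Reindexing `f` and `g` along translations gives morphisms `α : M[x] → N[x']` and
`β : N[x'][y'-x'] → M[x][y-x]` with `sh^{y-x}_{M[x]} = β ∘ sh^{y'-x'}_{N[x']} ∘ α`: the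
hypothesis `g[x'-x] ∘ f = sh_M` together with naturality of `g` pushes the middle shift
through `g`. Applying `F`, the map defining `rk_{M,F}(x,y)` factors through the one defining
`rk_{N,F}(x',y')`, and the rank of a composite is at most that of its middle factor.
-/

section Comap

variable {P Q : Type} [PartialOrder P] [PartialOrder Q]

theorem PersistenceModule.map_map (M : PersistenceModule K P) {a b c : P} (h₁ : a ≤ b)
    (h₂ : b ≤ c) (v : M.V a) : M.map h₂ (M.map h₁ v) = M.map (h₁.trans h₂) v :=
  LinearMap.congr_fun (M.map_comp h₁ h₂) v

theorem PersistenceHom.app_map {M N : PersistenceModule K P} (f : PersistenceHom M N)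
    {a b : P} (h : a ≤ b) (v : M.V a) : f.app b (M.map h v) = N.map h (f.app a v) :=
  LinearMap.congr_fun (f.naturality h) v

@[ext]
theorem PersistenceHom.ext {M N : PersistenceModule K P} {f g : PersistenceHom M N}
    (h : ∀ x, f.app x = g.app x) : f = g := by
  cases f; cases g
  congr 1
  exact funext h

/-- The shift `M[a]` is definitionally `M.comap (a + ·)`. -/
def PersistenceModule.comap (M : PersistenceModule K Q) (s : P → Q) (hs : Monotone s) :
    PersistenceModule K P where
  V z := M.V (s z)
  map h := M.map (hs h)
  map_refl z := M.map_refl (s z)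
  map_comp _ _ := M.map_comp _ _

def PersistenceHom.comap {M N : PersistenceModule K Q} (f : PersistenceHom M N) (s : P → Q)
    (hs : Monotone s) : PersistenceHom (M.comap s hs) (N.comap s hs) where
  app z := f.app (s z)
  naturality h := f.naturality (hs h)

def PersistenceModule.comapHomOfLE (M : PersistenceModule K Q) {s t : P → Q}
    (hs : Monotone s) (ht : Monotone t) (hst : s ≤ t) :
    PersistenceHom (M.comap s hs) (M.comap t ht) where
  app z := M.map (hst z)
  naturality {z w} h := by
    change (M.map (hst w)).comp (M.map (hs h)) = (M.map (ht h)).comp (M.map (hst z))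
    rw [M.map_comp, M.map_comp]

end Comap

theorem lrank_comp_comp_le {U V W X : Type}
    [AddCommGroup U] [Module K U] [AddCommGroup V] [Module K V]
    [AddCommGroup W] [Module K W] [AddCommGroup X] [Module K X] [FiniteDimensional K W]
    (a : U →ₗ[K] V) (m : V →ₗ[K] W) (c : W →ₗ[K] X) :
    lrank (c.comp (m.comp a)) ≤ lrank m :=
  calc lrank (c.comp (m.comp a))
      = Module.finrank K ((LinearMap.range (m.comp a)).map c) := by
        rw [lrank, LinearMap.range_comp]
    _ ≤ lrank (m.comp a) := Submodule.finrank_map_le c _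
    _ ≤ lrank m := Submodule.finrank_mono (LinearMap.range_comp_le_range a m)

section FRank

variable {P : Type} [AddCommGroup P] [PartialOrder P] [IsOrderedAddMonoid P]

theorem PersistenceHom.app_map_of_shift {M N : PersistenceModule K P} {a : P}
    (f : PersistenceHom M (N.shift a)) {z w : P} (h : z ≤ w) (v : M.V z) :
    f.app w (M.map h v) = N.map (add_le_add_right h a) (f.app z v) :=
  f.app_map h v

theorem frk_le_of_shMor_eq_comp (F : PMFunctor K P) {M N : PersistenceModule K P}
    (hM : M.pfd) (hN : N.pfd) {x y x' y' : P} (hxy : x ≤ y) (hx'y' : x' ≤ y')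
    (α : PersistenceHom (M.shift x) (N.shift x'))
    (β : PersistenceHom ((N.shift x').shift (y' - x')) ((M.shift x).shift (y - x)))
    (hfac : shMor (M.shift x) (y - x) (sub_nonneg.mpr hxy) =
      β.comp ((shMor (N.shift x') (y' - x') (sub_nonneg.mpr hx'y')).comp α)) :
    frk F M hM x y ≤ frk F N hN x' y' := by
  have hMx := hM.shift x
  have hNx := hN.shift x'
  have hNxy := hNx.shift (y' - x')
  have := F.objFin _ hNxy
  rw [frk, frk, dif_pos hxy, dif_pos hx'y', hfac, F.fmap_comp hMx hNxy (hMx.shift (y - x)),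
    F.fmap_comp hMx hNx hNxy]
  exact_mod_cast lrank_comp_comp_le (F.fmap hMx hNx α)
    (F.fmap hNx hNxy (shMor (N.shift x') (y' - x') (sub_nonneg.mpr hx'y')))
    (F.fmap hNxy (hMx.shift (y - x)) β)

theorem frk_le_of_comp_eq_shMor (F : PMFunctor K P) (M N : PersistenceModule K P)
    (hM : M.pfd) (hN : N.pfd) (x x' y' y : P) (hxx' : x ≤ x') (hx'y' : x' ≤ y')
    (hy'y : y' ≤ y) (f : PersistenceHom M (N.shift (x' - x)))
    (g : PersistenceHom N (M.shift (y - y')))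
    (hfg : ∀ z, (g.app (x' - x + z)).comp (f.app z) =
      M.map ((le_add_of_nonneg_left (sub_nonneg.mpr hxx')).trans
        (le_add_of_nonneg_left (sub_nonneg.mpr hy'y)) :
          z ≤ y - y' + (x' - x + z))) :
    frk F M hM x y ≤ frk F N hN x' y' := by
  have hxy : x ≤ y := hxx'.trans (hx'y'.trans hy'y)
  have hmono : ∀ a b : P, Monotone fun z => a + (b + z) :=
    fun a b => (monotone_id.const_add b).const_add a
  let α : PersistenceHom (M.shift x) (N.shift x') :=
    (N.comapHomOfLE (s := fun z => x' - x + (x + z)) (t := (x' + ·)) (hmono _ x)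
      (monotone_id.const_add x') fun z => le_of_eq (by beta_reduce; abel)).comp
      (f.comap (x + ·) (monotone_id.const_add x))
  let β : PersistenceHom ((N.shift x').shift (y' - x')) ((M.shift x).shift (y - x)) :=
    (M.comapHomOfLE (s := fun z => y - y' + (x' + (y' - x' + z)))
      (t := fun z => x + (y - x + z)) ((hmono x' _).const_add _) (hmono x _)
      fun z => le_of_eq (by beta_reduce; abel)).comp
      (g.comap _ (hmono x' (y' - x')))
  refine frk_le_of_shMor_eq_comp F hM hN hxy hx'y' α β ?_
  refine PersistenceHom.ext fun z => LinearMap.ext fun (v : M.V (x + z)) => ?_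
  set w : N.V (x' - x + (x + z)) := f.app (x + z) v
  have hgw : g.app (x' - x + (x + z)) w = M.map _ v := LinearMap.congr_fun (hfg (x + z)) v
  change M.map (_ : x + z ≤ x + (y - x + z)) v =
    M.map _ (g.app (x' + (y' - x' + z)) (N.map (_ : x' + z ≤ _) (N.map (_ : _ ≤ x' + z) w)))
  rw [N.map_map, g.app_map_of_shift, hgw, M.map_map, M.map_map]

end FRank

/-- the key lemma for erosion-type stability, over `ℤ^d` and `ℝ^d`. -/
theorem statement4 (K : Type) [Field K] (d : ℕ) :
    (∀ (F : PMFunctor K (Fin d → ℤ)) (M N : PersistenceModule K (Fin d → ℤ))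
        (hM : M.pfd) (hN : N.pfd) (x x' y' y : Fin d → ℤ)
        (hxx' : x ≤ x') (hx'y' : x' ≤ y') (hy'y : y' ≤ y)
        (f : PersistenceHom M (N.shift (x' - x)))
        (g : PersistenceHom N (M.shift (y - y'))),
        (∀ z, (g.app (x' - x + z)).comp (f.app z) =
          M.map ((le_add_of_nonneg_left (sub_nonneg.mpr hxx')).trans
            (le_add_of_nonneg_left (sub_nonneg.mpr hy'y)) :
              z ≤ y - y' + (x' - x + z))) →
        frk F M hM x y ≤ frk F N hN x' y') ∧
    (∀ (F : PMFunctor K (Fin d → ℝ)) (M N : PersistenceModule K (Fin d → ℝ))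
        (hM : M.pfd) (hN : N.pfd) (x x' y' y : Fin d → ℝ)
        (hxx' : x ≤ x') (hx'y' : x' ≤ y') (hy'y : y' ≤ y)
        (f : PersistenceHom M (N.shift (x' - x)))
        (g : PersistenceHom N (M.shift (y - y'))),
        (∀ z, (g.app (x' - x + z)).comp (f.app z) =
          M.map ((le_add_of_nonneg_left (sub_nonneg.mpr hxx')).trans
            (le_add_of_nonneg_left (sub_nonneg.mpr hy'y)) :
              z ≤ y - y' + (x' - x + z))) →
        frk F M hM x y ≤ frk F N hN x' y') :=
  ⟨frk_le_of_comp_eq_shMor, frk_le_of_comp_eq_shMor⟩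

end
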